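/- For all n, k ≥ 0, ∑_{m=0}^{n} (−1)^{n−m} · m! · S(n, m) · (m+1)^k = ∑_{m=0}^{min(n,k)} m! · S(n+1, m+1) · m! · S(k+1, m+1). (That is, the two classical explicit formulas for the poly-Bernoulli number B_n^{(-k)} agree.) -/
import Mathlib


open Finset

/-- The Stirling numbers of the second kind. -/
def stirling : ℕ → ℕ → ℕ
  | 0, 0 => 1
  | 0, _ + 1 => 0
  | _ + 1, 0 => 0
  | n + 1, k + 1 => stirling n k + (k + 1) * stirling n (k + 1)

/-- The two classical explicit formulas for the poly-Bernoulli number `B_n^{(-k)}` agree: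
`∑_{m=0}^n (-1)^{n-m} m! S(n,m) (m+1)^k
  = ∑_{m=0}^{min(n,k)} m! S(n+1,m+1) m! S(k+1,m+1)`. -/
lemma stirling_zero_right (n : ℕ) : stirling (n+1) 0 = 0 := rfl

lemma stirling_succ (n k : ℕ) : stirling (n+1) (k+1) = stirling n k + (k+1) * stirling n (k+1) := rfl

lemma stirling_eq_zero_of_lt : ∀ n m, n < m → stirling n m = 0 := by
  intro n
  induction n with
  | zero => intro m h; match m, h with | m+1, _ => rfl
  | succ n ih =>
    intro m h
    match m, h with
    | m+1, h =>
      rw [stirling_succ, ih m (by omega), ih (m+1) (by omega)]; ring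

lemma lemA (m k : ℕ) :
    (m+1)^k = ∑ j ∈ range (m+1), m.choose j * j.factorial * stirling (k+1) (j+1) := by
  induction k with
  | zero =>
    rw [pow_zero, Finset.sum_eq_single 0]
    · simp [stirling]
    · intro j _ hj
      match j, hj with
      | j+1, _ => simp [stirling, stirling_eq_zero_of_lt 0 (j+1) (by omega)]
    · intro h; simp at h
  | succ k ih =>
    rw [pow_succ, mul_comm, ih, Finset.mul_sum]
    have shift : ∑ j ∈ range (m+1), m.choose j * j.factorial * stirling (k+1) j
        = ∑ j ∈ range (m+1), m.choose (j+1) * (j+1).factorial * stirling (k+1) (j+1) := by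
      rw [Finset.sum_range_succ' (fun j => m.choose j * j.factorial * stirling (k+1) j) m,
        Finset.sum_range_succ (fun j => m.choose (j+1) * (j+1).factorial * stirling (k+1) (j+1)) m]
      simp [stirling, Nat.choose_succ_self]
    have expand : ∀ j, m.choose j * j.factorial * stirling (k+2) (j+1)
        = m.choose j * j.factorial * stirling (k+1) j
          + m.choose j * j.factorial * ((j+1) * stirling (k+1) (j+1)) := by
      intro j; rw [stirling_succ (k+1) j]; ring
    rw [Finset.sum_congr rfl (fun j _ => expand j)]
    rw [Finset.sum_add_distrib, shift, ← Finset.sum_add_distrib]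
    apply Finset.sum_congr rfl
    intro j _
    have h : (m+1) * m.choose j = (m.choose j + m.choose (j+1)) * (j+1) := by
      rw [← Nat.choose_succ_succ]; exact Nat.add_one_mul_choose_eq m j
    have h' : ((m:ℤ)+1) * m.choose j = ((m.choose j : ℤ) + m.choose (j+1)) * (j+1) := by
      exact_mod_cast h
    zify
    push_cast [Nat.factorial_succ]
    linear_combination ((j.factorial : ℤ) * (stirling (k+1) (j+1) : ℤ)) * h' 

lemma chooseId (m j : ℕ) :
    ((m:ℤ)+1) * (m+1).choose j = ((m:ℤ)+j+1) * m.choose j + j * m.choose (j-1) := by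
  match j with
  | 0 => simp
  | j+1 =>
    have hp : ((m+1).choose (j+1) : ℤ) = m.choose j + m.choose (j+1) := by
      exact_mod_cast Nat.choose_succ_succ m j
    have h2 : (m.choose (j+1) : ℤ) * (j+1) = m.choose j * (m - j) := by
      rcases le_or_gt j m with h | h
      · have hh : ((m.choose (j+1) * (j+1) : ℕ) : ℤ) = ((m.choose j * (m - j) : ℕ) : ℤ) :=
          congrArg _ (Nat.choose_succ_right_eq m j)
        push_cast [Nat.cast_sub h] at hh
        exact_mod_cast hh
      · rw [Nat.choose_eq_zero_of_lt (by omega), Nat.choose_eq_zero_of_lt (by omega)]; simp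
    push_cast
    linear_combination ((m:ℤ)+1) * hp - h2

lemma lemB : ∀ n j : ℕ, ∑ m ∈ range (n+1), (-1:ℤ)^m * m.factorial * stirling n m * m.choose j
    = (-1:ℤ)^n * j.factorial * stirling (n+1) (j+1) := by
  intro n
  induction n with
  | zero =>
    intro j
    match j with
    | 0 => simp [stirling]
    | j+1 => simp [stirling, stirling_eq_zero_of_lt 0 (j+1) (by omega),
        stirling_eq_zero_of_lt 1 (j+2) (by omega)]
  | succ n ih =>
    intro j
    set g : ℕ → ℤ := fun i => (-1:ℤ)^i * i.factorial * stirling n i * i.choose j with hg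
    set g' : ℕ → ℤ := fun i => (-1:ℤ)^i * i.factorial * stirling n i * i.choose (j-1) with hg'
    set h : ℕ → ℤ := fun i => (-1:ℤ)^i * i.factorial * (i * stirling n i) * i.choose j with hh
    have shift : ∑ i ∈ range (n+1), h (i+1) = ∑ i ∈ range (n+1), h i := by
      have e1 := Finset.sum_range_succ' h (n+1)
      have e2 := Finset.sum_range_succ h (n+1)
      have h0 : h 0 = 0 := by simp [hh]
      have hn1 : h (n+1) = 0 := by
        simp [hh, stirling_eq_zero_of_lt n (n+1) (by omega)]
      rw [e2, h0, hn1, add_zero] at e1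
      linarith [e1]
    rw [Finset.sum_range_succ' (fun m => (-1:ℤ)^m * m.factorial * stirling (n+1) m * m.choose j) (n+1)]
    have f0 : ((-1:ℤ)^0 * Nat.factorial 0 * stirling (n+1) 0 * Nat.choose 0 j) = 0 := by
      simp [stirling]
    have split : ∀ i, (-1:ℤ)^(i+1) * (i+1).factorial * stirling (n+1) (i+1) * (i+1).choose j
        = ((-1:ℤ)^(i+1) * (i+1).factorial * stirling n i * (i+1).choose j) + h (i+1) := by
      intro i
      rw [stirling_succ n i, hh]
      push_cast
      ring
    rw [f0, add_zero, Finset.sum_congr rfl (fun i _ => split i), Finset.sum_add_distrib, shift,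
      ← Finset.sum_add_distrib]
    have step2 : ∀ i, ((-1:ℤ)^(i+1) * (i+1).factorial * stirling n i * (i+1).choose j) + h i
        = (-(j:ℤ)-1) * g i + (-(j:ℤ)) * g' i := by
      intro i
      have hc := chooseId i j
      rw [hh, hg, hg']
      push_cast [Nat.factorial_succ, pow_succ]
      linear_combination (-((-1:ℤ)^i * (i.factorial:ℤ) * (stirling n i : ℤ))) * hc
    rw [Finset.sum_congr rfl (fun i _ => step2 i), Finset.sum_add_distrib, ← Finset.mul_sum,
      ← Finset.mul_sum, hg, hg']
    rw [ih j, ih (j-1)]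
    match j with
    | 0 =>
      rw [stirling_succ (n+1) 0]
      push_cast [stirling_zero_right]
      ring
    | j+1 =>
      rw [stirling_succ (n+1) (j+1)]
      push_cast [Nat.factorial_succ]
      ring


theorem polyBernoulli_formulas_agree (n k : ℕ) :
    (∑ m ∈ Finset.range (n + 1),
        (-1 : ℤ) ^ (n - m) * m.factorial * stirling n m * (m + 1) ^ k)
      = ∑ m ∈ Finset.range (min n k + 1),
          (m.factorial * stirling (n + 1) (m + 1) * m.factorial * stirling (k + 1) (m + 1) : ℤ) := by
  have hpow : (-1:ℤ)^n * (-1)^n = 1 := by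
    rw [← pow_add, ← two_mul, pow_mul]; norm_num
  have hsign : ∀ m, m ≤ n → (-1:ℤ)^(n-m) = (-1)^n * (-1)^m := by
    intro m hm
    conv_rhs => rw [← Nat.sub_add_cancel hm]
    rw [pow_add, mul_assoc, ← pow_add, ← two_mul, pow_mul]
    norm_num
  calc (∑ m ∈ Finset.range (n + 1),
        (-1 : ℤ) ^ (n - m) * m.factorial * stirling n m * (m + 1) ^ k)
      = ∑ m ∈ range (n+1), ∑ j ∈ range (n+1),
          ((-1:ℤ)^n * ((j.factorial : ℤ) * stirling (k+1) (j+1)))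
            * ((-1:ℤ)^m * m.factorial * stirling n m * m.choose j) := by
        apply Finset.sum_congr rfl
        intro m hm
        have hmn : m ≤ n := by simp [Finset.mem_range] at hm; omega
        have hA : ((m:ℕ)+1)^k = ∑ j ∈ range (n+1), m.choose j * j.factorial * stirling (k+1) (j+1) := by
          rw [lemA m k]
          apply Finset.sum_subset (Finset.range_subset_range.2 (by omega))
          intro x hx hxm
          have : m < x := by simp [Finset.mem_range] at hx hxm; omega
          rw [Nat.choose_eq_zero_of_lt this]
          simp
        have hA' : ((m:ℤ)+1)^k
            = ∑ j ∈ range (n+1), (m.choose j : ℤ) * j.factorial * stirling (k+1) (j+1) := by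
          exact_mod_cast hA
        rw [hsign m hmn]
        push_cast
        rw [hA', Finset.mul_sum]
        apply Finset.sum_congr rfl
        intro j _
        ring
    _ = ∑ j ∈ range (n+1),
          ((-1:ℤ)^n * ((j.factorial : ℤ) * stirling (k+1) (j+1)))
            * ∑ m ∈ range (n+1), (-1:ℤ)^m * m.factorial * stirling n m * m.choose j := by
        rw [Finset.sum_comm]
        exact Finset.sum_congr rfl (fun j _ => (Finset.mul_sum _ _ _).symm)
    _ = ∑ j ∈ range (n+1),
          ((j.factorial : ℤ) * stirling (n+1) (j+1) * j.factorial * stirling (k+1) (j+1)) := by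
        apply Finset.sum_congr rfl
        intro j _
        rw [lemB n j]
        linear_combination ((j.factorial:ℤ) * stirling (k+1) (j+1) * j.factorial * stirling (n+1) (j+1)) * hpow
    _ = ∑ m ∈ Finset.range (min n k + 1),
          ((m.factorial : ℤ) * stirling (n + 1) (m + 1) * m.factorial * stirling (k + 1) (m + 1)) := by
        symm
        apply Finset.sum_subset (Finset.range_subset_range.2 (by omega))
        intro x hx hnx
        have : k < x := by simp [Finset.mem_range] at hx hnx; omega
        rw [stirling_eq_zero_of_lt (k+1) (x+1) (by omega)]
        push_cast
        ring
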